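/- Let f : ℤ₂³ → ℤ be the weight function with f(001) = 4, f(011) = 8, f(101) = 3, and f(y) = 0 for all other y, and let A u v = f(u + v) be the adjacency matrix of the weighted cubelike graph Cay(ℤ₂³, f). Then perfect state transfer occurs at time π/2 between vertices 000 and 101: the (101, 000) entry of exp(-(i π/2)·A) has absolute value 1. -/

import Mathlib

/-!
Let `P y` be the permutation matrix of translation by `y`. Then
`A = 4 • P 001 + 8 • P 011 + 3 • P 101`, and the `P y` commute and square to `1`, so
`exp (-(i t) • P y) = cos t • 1 - (i sin t) • P y`. At time `π/2` the weights `4` and `8` give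
`t = 2π, 4π` and contribute `1`, while the weight `3` gives `t = 3π/2` and contributes `i • P 101`.
So `exp (-(iπ/2) • A) = i • P 101`, whose `(101, 000)` entry is `i`.
-/

open Matrix

open Complex NormedSpace

section Involution

variable {𝔸 : Type*} [NormedRing 𝔸] [NormedAlgebra ℂ 𝔸] [Algebra ℚ 𝔸] {P : 𝔸}

/-- The ring hom sending `(1, 0)` and `(0, 1)` to the eigenprojections `(1 + P) / 2` and
`(1 - P) / 2` of the involution `P`. -/
noncomputable def involutionRingHom (hP : P * P = 1) : ℂ × ℂ →+* 𝔸 :=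
  RingHom.mk'
    { toFun := fun p => ((p.1 + p.2) / 2) • (1 : 𝔸) + ((p.1 - p.2) / 2) • P
      map_one' := by norm_num
      map_mul' := by
        rintro ⟨a, b⟩ ⟨c, d⟩
        simp only [Prod.fst_mul, Prod.snd_mul, add_mul, mul_add, smul_mul_assoc,
          mul_smul_comm, one_mul, mul_one, hP]
        module }
    (by
      rintro ⟨a, b⟩ ⟨c, d⟩
      simp only [MonoidHom.coe_mk, OneHom.coe_mk, Prod.fst_add, Prod.snd_add]
      module)

theorem exp_smul_of_mul_self_eq_one (hP : P * P = 1) (c : ℂ) :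
    exp (c • P) = cosh c • (1 : 𝔸) + sinh c • P := by
  have hcont : Continuous (involutionRingHom hP) := by
    change Continuous fun p : ℂ × ℂ => ((p.1 + p.2) / 2) • (1 : 𝔸) + ((p.1 - p.2) / 2) • P
    fun_prop
  have hcP : involutionRingHom hP (c, -c) = c • P := by
    change ((c + -c) / 2) • (1 : 𝔸) + ((c - -c) / 2) • P = c • P
    rw [add_neg_cancel, sub_neg_eq_add, ← two_mul, mul_div_cancel_left₀ _ two_ne_zero,
      zero_div, zero_smul, zero_add]
  have hexp : exp ((c, -c) : ℂ × ℂ) = (Complex.exp c, Complex.exp (-c)) := by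
    ext <;> simp [Complex.exp_eq_exp_ℂ]
  rw [← hcP, ← map_exp _ hcont, hexp, Complex.cosh, Complex.sinh]
  rfl

theorem exp_neg_I_mul_smul_of_mul_self_eq_one (hP : P * P = 1) (t : ℂ) :
    exp (-(I * t) • P) = cos t • (1 : 𝔸) - (I * sin t) • P := by
  rw [exp_smul_of_mul_self_eq_one hP, cosh_neg, sinh_neg, mul_comm, cosh_mul_I, sinh_mul_I,
    neg_smul, mul_comm, sub_eq_add_neg]

theorem Matrix.exp_neg_I_mul_smul_of_mul_self_eq_one {n : Type*} [Fintype n] [DecidableEq n]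
    {P : Matrix n n ℂ} (hP : P * P = 1) (t : ℂ) :
    exp (-(I * t) • P) = cos t • (1 : Matrix n n ℂ) - (I * sin t) • P :=
  open scoped Matrix.Norms.Operator in _root_.exp_neg_I_mul_smul_of_mul_self_eq_one hP t

end Involution

section Translation

variable (R : Type*) {G : Type*} [AddCommGroup G] [DecidableEq G]

abbrev translationMatrix [Zero R] [One R] (y : G) : Matrix G G R :=
  (Equiv.addRight y).permMatrix R

variable {R}

theorem translationMatrix_apply [Zero R] [One R] (y u v : G) :
    translationMatrix R y u v = if v = u + y then 1 else 0 := by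
  simp [PEquiv.toMatrix_apply, eq_comm]

variable [Fintype G] [Semiring R]

theorem translationMatrix_add (y z : G) :
    translationMatrix R (y + z) = translationMatrix R y * translationMatrix R z := by
  rw [translationMatrix, Equiv.addRight_add, permMatrix_mul]

theorem translationMatrix_commute (y z : G) :
    Commute (translationMatrix R y) (translationMatrix R z) := by
  rw [Commute, SemiconjBy, ← translationMatrix_add, ← translationMatrix_add, add_comm]

theorem translationMatrix_mul_self (hG : ∀ x : G, x + x = 0) (y : G) :
    translationMatrix R y * translationMatrix R y = 1 := by
  rw [← translationMatrix_add, hG, translationMatrix, Equiv.addRight_zero, permMatrix_one]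

theorem eq_sum_smul_translationMatrix (hG : ∀ x : G, x + x = 0) (f : G → R)
    (A : Matrix G G R) (hA : ∀ u v, A u v = f (u + v)) :
    A = ∑ y, f y • translationMatrix R y := by
  ext u v
  have hy : ∀ y, v = u + y ↔ y = u + v := fun y => by
    constructor <;> rintro rfl <;> rw [← add_assoc, hG, zero_add]
  simp only [hA, Matrix.sum_apply, Matrix.smul_apply, translationMatrix_apply, hy, smul_eq_mul,
    mul_ite, mul_one, mul_zero, Finset.sum_ite_eq', Finset.mem_univ, if_true]

end Translation

theorem weighted_cubelike_pst_example1
    (f : (Fin 3 → ZMod 2) → ℤ)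
    (hf1 : f ![0,0,1] = 4) (hf2 : f ![0,1,1] = 8) (hf3 : f ![1,0,1] = 3)
    (hf0 : ∀ y, y ≠ ![0,0,1] → y ≠ ![0,1,1] → y ≠ ![1,0,1] → f y = 0)
    (A : Matrix (Fin 3 → ZMod 2) (Fin 3 → ZMod 2) ℂ)
    (hA : ∀ u v, A u v = (f (u + v) : ℂ)) :
    ‖NormedSpace.exp ((-(Complex.I * (Real.pi / 2))) • A)
      ![1,0,1] ![0,0,0]‖ = 1 := by
  have hBool : ∀ x : Fin 3 → ZMod 2, x + x = 0 := by decide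
  have hA : A = (4 : ℂ) • translationMatrix ℂ ![0,0,1]
      + ((8 : ℂ) • translationMatrix ℂ ![0,1,1] + (3 : ℂ) • translationMatrix ℂ ![1,0,1]) := by
    rw [eq_sum_smul_translationMatrix hBool (fun y => (f y : ℂ)) A hA,
      ← Finset.sum_subset (Finset.subset_univ {![0,0,1], ![0,1,1], ![1,0,1]}),
      Finset.sum_insert (by decide), Finset.sum_insert (by decide), Finset.sum_singleton,
      hf1, hf2, hf3]
    · push_cast; rfl
    · intro y _ hy
      simp only [Finset.mem_insert, Finset.mem_singleton, not_or] at hy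
      rw [hf0 y hy.1 hy.2.1 hy.2.2, Int.cast_zero, zero_smul]
  have hP := translationMatrix_mul_self (R := ℂ) hBool
  have hcomm : ∀ (a b : ℂ) (y z : Fin 3 → ZMod 2),
      Commute (a • translationMatrix ℂ y) (b • translationMatrix ℂ z) :=
    fun a b y z => ((translationMatrix_commute y z).smul_left a).smul_right b
  have hexp : exp (-(I * (Real.pi / 2)) • A) = I • translationMatrix ℂ ![1,0,1] := by
    simp only [hA, smul_add, smul_smul, neg_mul, mul_assoc]
    rw [Matrix.exp_add_of_commute _ _ ((hcomm ..).add_right (hcomm ..)),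
      Matrix.exp_add_of_commute _ _ (hcomm ..), exp_neg_I_mul_smul_of_mul_self_eq_one (hP _),
      exp_neg_I_mul_smul_of_mul_self_eq_one (hP _), exp_neg_I_mul_smul_of_mul_self_eq_one (hP _),
      show (Real.pi / 2 * 4 : ℂ) = 2 * Real.pi by ring,
      show (Real.pi / 2 * 8 : ℂ) = 2 * Real.pi + 2 * Real.pi by ring,
      show (Real.pi / 2 * 3 : ℂ) = Real.pi / 2 + Real.pi by ring]
    simp [cos_add_two_pi, sin_add_two_pi, cos_add_pi, sin_add_pi]
  rw [hexp, Matrix.smul_apply, translationMatrix_apply, if_pos (by decide), smul_eq_mul, mul_one,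
    norm_I]
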